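/- If x ∈ ℂ^N is periodic and x̂ is its conjugate reflection, x̂[n] = conj(x[−n]) (indices mod N), then x̂ has the same FROG trace as x: for all p, k, |Σ_{n=0}^{N−1} x̂[n] x̂[n+pL] e^{−2πink/N}|² = |Σ_{n=0}^{N−1} x[n] x[n+pL] e^{−2πink/N}|². -/

import Mathlib

/-!
Substituting `n ↦ -(m + c)` turns the sum for `x̂` into the complex conjugate of the sum for `x`,
multiplied by the unimodular factor `ψ (-c)` coming from the additive character
`ψ n = exp (-2πi n k / N)`; taking norms removes both.
-/

open ComplexConjugate

namespace AddChar

variable {G K : Type*} [AddCommGroup G] [Fintype G] [RCLike K]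

lemma sum_conj_neg_mul_conj_neg_add_mul (ψ : AddChar G K) (x : G → K) (c : G) :
    ∑ n, conj (x (-n)) * conj (x (-(n + c))) * ψ n =
      conj (ψ c * ∑ n, x n * x (n + c) * ψ n) := by
  let reflect : G ≃ G := (Equiv.neg G).trans (Equiv.subRight c)
  rw [← reflect.sum_comp, map_mul, map_sum, Finset.mul_sum]
  refine Finset.sum_congr rfl fun m _ ↦ ?_
  have hm : reflect m = -(m + c) := by simp [reflect]; abel
  have hm' : -(-(m + c) + c) = m := by abel
  rw [hm, neg_neg, hm', map_neg_eq_conj, map_add_eq_mul]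
  simp only [map_mul]
  ring

lemma norm_sum_conj_neg_mul_conj_neg_add_mul (ψ : AddChar G K) (x : G → K) (c : G) :
    ‖∑ n, conj (x (-n)) * conj (x (-(n + c))) * ψ n‖ =
      ‖∑ n, x n * x (n + c) * ψ n‖ := by
  rw [sum_conj_neg_mul_conj_neg_add_mul, RCLike.norm_conj, norm_mul, norm_apply, one_mul]

end AddChar

lemma ZMod.exp_neg_val_mul_eq_stdAddChar {N : ℕ} [NeZero N] (k : ℕ) (n : ZMod N) :
    Complex.exp (-2 * Real.pi * Complex.I * n.val * k / N) =
      stdAddChar.mulShift (-k : ZMod N) n := by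
  have hcast : ((-(n.val * k : ℤ) : ℤ) : ZMod N) = -k * n := by
    push_cast
    rw [ZMod.natCast_zmod_val]
    ring
  rw [AddChar.mulShift_apply, ← hcast, stdAddChar_coe]
  push_cast
  ring_nf

theorem frog_trace_reflection_invariant_general (N L : ℕ) [NeZero N]
    (x : ZMod N → ℂ) (p k : ℕ) :
    ‖∑ n : ZMod N,
        (starRingEnd ℂ) (x (-n)) * (starRingEnd ℂ) (x (-(n + (p * L : ℕ)))) *
        Complex.exp (-2 * Real.pi * Complex.I * n.val * k / N)‖ ^ 2 =
    ‖∑ n : ZMod N,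
        x n * x (n + (p * L : ℕ)) *
        Complex.exp (-2 * Real.pi * Complex.I * n.val * k / N)‖ ^ 2 := by
  simp only [ZMod.exp_neg_val_mul_eq_stdAddChar]
  rw [AddChar.norm_sum_conj_neg_mul_conj_neg_add_mul]

/-- The conjugate reflection `x̂[n] = conj(x[−n])` leaves the FROG trace unchanged. -/
theorem frog_trace_reflection_invariant (N L : ℕ) [NeZero N] (hL : 1 ≤ L) (hLN : L < N)
    (x : ZMod N → ℂ) (p k : ℕ) :
    ‖∑ n : ZMod N,
        (starRingEnd ℂ) (x (-n)) * (starRingEnd ℂ) (x (-(n + (p * L : ℕ)))) *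
        Complex.exp (-2 * Real.pi * Complex.I * n.val * k / N)‖ ^ 2 =
    ‖∑ n : ZMod N,
        x n * x (n + (p * L : ℕ)) *
        Complex.exp (-2 * Real.pi * Complex.I * n.val * k / N)‖ ^ 2 :=
  frog_trace_reflection_invariant_general N L x p k
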